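/- arXiv:1807.02363 — 3 statements merged into one kernel-verified Lean document; each statement's English description precedes it below -/
import Mathlib

section
/- Let d > 1 be an integer, λ := (d−1)/2, and n ≥ 0 an integer, and set β_{λ,n,μ} := (1−λ)_μ (n+1)_μ/(μ! (n+λ+1)_μ). Then the series Σ_{μ=1}^∞ |β_{λ,n,μ} − β_{λ,n,μ−1}| = Σ_{μ=1}^∞ (λ(n+2μ)/(μ(n+λ+μ))) |β_{λ,n,μ−1}| converges. -/
open Real

/-- Rising factorial `(x)_m = x (x+1) ⋯ (x+m-1)`. -/
noncomputable def risingFactorial (x : ℝ) (m : ℕ) : ℝ :=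
  ∏ i ∈ Finset.range m, (x + i)

/-- `β_{λ,n,μ} = (1-λ)_μ (n+1)_μ / (μ! (n+λ+1)_μ)`. -/
noncomputable def betaCoef (lam : ℝ) (n : ℕ) (μ : ℕ) : ℝ :=
  risingFactorial (1 - lam) μ * risingFactorial ((n : ℝ) + 1) μ /
    ((μ.factorial : ℝ) * risingFactorial ((n : ℝ) + lam + 1) μ)

lemma rf_pos {x : ℝ} (hx : 0 < x) (m : ℕ) : 0 < risingFactorial x m :=
  Finset.prod_pos fun i _ => add_pos_of_pos_of_nonneg hx (Nat.cast_nonneg i)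

lemma beta_rec {lam : ℝ} (hlam : 0 < lam) (n μ : ℕ) :
    betaCoef lam n (μ+1) = betaCoef lam n μ *
      (((1 - lam + μ) * ((n:ℝ) + 1 + μ)) / ((((μ:ℝ)+1)) * ((n:ℝ) + lam + 1 + μ))) := by
  have hD : (0:ℝ) < (n:ℝ) + lam + 1 + μ := by positivity
  have hR : (0:ℝ) < risingFactorial ((n:ℝ) + lam + 1) μ := rf_pos (by positivity) μ
  have hF : ((μ.factorial : ℝ)) ≠ 0 := Nat.cast_ne_zero.mpr μ.factorial_ne_zero
  unfold betaCoef risingFactorial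
  rw [Finset.prod_range_succ, Finset.prod_range_succ, Finset.prod_range_succ,
    Nat.factorial_succ]
  push_cast
  unfold risingFactorial at hR
  field_simp

/-- for an integer `d > 1`, `λ = (d-1)/2` and `n ≥ 0`, the series
`Σ_{μ≥1} |β_{λ,n,μ} - β_{λ,n,μ-1}|` converges, and its terms equal
`(λ(n+2μ)/(μ(n+λ+μ))) |β_{λ,n,μ-1}|`. -/
theorem betaCoef_diff_summable (d : ℕ) (hd : 1 < d) (n : ℕ) :
    Summable (fun μ : ℕ =>
      |betaCoef (((d : ℝ) - 1) / 2) n (μ + 1) - betaCoef (((d : ℝ) - 1) / 2) n μ|)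
    ∧ ∀ μ : ℕ,
      |betaCoef (((d : ℝ) - 1) / 2) n (μ + 1) - betaCoef (((d : ℝ) - 1) / 2) n μ|
        = ((((d : ℝ) - 1) / 2) * ((n : ℝ) + 2 * ((μ : ℝ) + 1)))
            / (((μ : ℝ) + 1) * ((n : ℝ) + ((d : ℝ) - 1) / 2 + ((μ : ℝ) + 1)))
            * |betaCoef (((d : ℝ) - 1) / 2) n μ| := by
  set lam : ℝ := ((d : ℝ) - 1) / 2 with hlamdef
  have hd2 : (2:ℝ) ≤ (d:ℝ) := by exact_mod_cast hd
  have hlam : 0 < lam := by rw [hlamdef]; linarith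
  set β : ℕ → ℝ := betaCoef lam n with hβ
  -- the difference formula
  have hdiff : ∀ μ : ℕ, β (μ+1) - β μ =
      β μ * (-(lam * ((n:ℝ) + 2 * ((μ:ℝ)+1))) / (((μ:ℝ)+1) * ((n:ℝ) + lam + 1 + μ))) := by
    intro μ
    have hD : (0:ℝ) < ((μ:ℝ)+1) * ((n:ℝ) + lam + 1 + μ) := by positivity
    rw [hβ, beta_rec hlam n μ]
    field_simp
    ring
  have hDpos : ∀ μ : ℕ, (0:ℝ) < ((μ:ℝ)+1) * ((n:ℝ) + lam + 1 + μ) := by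
    intro μ; positivity
  -- the identity
  have hiden : ∀ μ : ℕ, |β (μ+1) - β μ|
      = (lam * ((n : ℝ) + 2 * ((μ : ℝ) + 1)))
          / (((μ : ℝ) + 1) * ((n : ℝ) + lam + ((μ : ℝ) + 1))) * |β μ| := by
    intro μ
    rw [hdiff μ, abs_mul, abs_div, abs_neg]
    have h1 : |lam * ((n:ℝ) + 2 * ((μ:ℝ)+1))| = lam * ((n:ℝ) + 2 * ((μ:ℝ)+1)) :=
      abs_of_nonneg (by positivity)
    have h2 : |((μ:ℝ)+1) * ((n:ℝ) + lam + 1 + μ)| = ((μ:ℝ)+1) * ((n:ℝ) + lam + 1 + μ) :=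
      abs_of_nonneg (le_of_lt (hDpos μ))
    rw [h1, h2]
    have : (n:ℝ) + lam + 1 + μ = (n:ℝ) + lam + ((μ:ℝ)+1) := by ring
    rw [this]; ring
  refine ⟨?_, fun μ => by rw [hiden μ]⟩
  -- Summability via telescoping for μ ≥ d
  have key : ∀ μ : ℕ, d ≤ μ → |β (μ+1) - β μ| = |β μ| - |β (μ+1)| := by
    intro μ hμ
    have hμd : (d:ℝ) ≤ (μ:ℝ) := by exact_mod_cast hμ
    set c : ℝ := ((1 - lam + μ) * ((n:ℝ) + 1 + μ)) / (((μ:ℝ)+1) * ((n:ℝ) + lam + 1 + μ)) with hc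
    have hrec : β (μ+1) = β μ * c := beta_rec hlam n μ
    have hc0 : 0 ≤ c := by
      apply div_nonneg _ (le_of_lt (hDpos μ))
      have : 0 ≤ 1 - lam + μ := by rw [hlamdef]; linarith
      positivity
    have hc1 : c ≤ 1 := by
      rw [hc, div_le_one (hDpos μ)]
      nlinarith [hlam, Nat.cast_nonneg (α := ℝ) n, Nat.cast_nonneg (α := ℝ) μ]
    rw [hrec]
    have he : β μ * c - β μ = β μ * (c - 1) := by ring
    rw [he, abs_mul, abs_mul, abs_of_nonneg hc0, abs_of_nonpos (by linarith : c - 1 ≤ 0)]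
    ring
  rw [← summable_nat_add_iff d]
  apply summable_of_sum_range_le (c := |β d|) (fun μ => abs_nonneg _)
  intro k
  have hterm : ∀ i ∈ Finset.range k,
      |β (i + d + 1) - β (i + d)| = |β (i + d)| - |β (i + 1 + d)| := by
    intro i _
    rw [key (i + d) (Nat.le_add_left d i), show i + d + 1 = i + 1 + d from by omega]
  rw [Finset.sum_congr rfl hterm,
    Finset.sum_range_sub' (f := fun i => |β (i + d)|) k]
  simp only [Nat.zero_add]
  have := abs_nonneg (β (k + d))
  linarith
end

section
/- Let λ > 0 be a non-integer real number and n ≥ 0 an integer, and set β_{λ,n,μ} := (1−λ)_μ (n+1)_μ/(μ! (n+λ+1)_μ). Then there exists a constant C > 0 (depending on λ and n) such that |β_{λ,n,μ}| ≤ C μ^{−2λ} for all integers μ ≥ 1. -/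
open Real

/-!
With `a = n + 1 + λ`, consecutive coefficients satisfy
`β_{μ+1} = β_μ (1 - λ/(μ+1)) (1 - λ/(μ+a))`, and `(1 - λ/t)(t+1)^λ ≤ t^λ` for `t > 0`
(compare `1 - λ/t ≤ e^{-λ/t}` with `(1 + 1/t)^λ ≤ e^{λ/t}`). Hence, once both factors are
nonnegative, `|β_μ| (μ+1)^λ (μ+a)^λ` is nonincreasing, so `|β_μ| μ^{2λ}` is eventually
bounded, and therefore bounded.
-/

theorem one_sub_div_mul_add_one_rpow_le {lam t : ℝ} (hlam : 0 ≤ lam) (ht : 0 < t) :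
    (1 - lam / t) * (t + 1) ^ lam ≤ t ^ lam := by
  rcases le_or_gt (1 - lam / t) 0 with hneg | hpos
  · exact (mul_nonpos_of_nonpos_of_nonneg hneg (by positivity)).trans (by positivity)
  have hexp : 1 - lam / t ≤ exp (-(lam / t)) := by linarith [add_one_le_exp (-(lam / t))]
  have hpow : (t + 1) ^ lam ≤ t ^ lam * exp (lam / t) :=
    calc (t + 1) ^ lam ≤ (t * exp (1 / t)) ^ lam := by
          gcongr
          calc t + 1 = t * (1 / t + 1) := by field_simp; ring
            _ ≤ t * exp (1 / t) := by gcongr; exact add_one_le_exp _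
      _ = t ^ lam * exp (lam / t) := by
          rw [mul_rpow ht.le (exp_pos _).le, ← exp_mul, one_div_mul_eq_div]
  calc (1 - lam / t) * (t + 1) ^ lam ≤ exp (-(lam / t)) * (t ^ lam * exp (lam / t)) := by
        gcongr
    _ = t ^ lam := by rw [mul_left_comm, ← exp_add, neg_add_cancel, exp_zero, mul_one]

theorem abs_mul_rpow_le_of_succ_eq {f : ℕ → ℝ} {lam a : ℝ} {μ₀ μ : ℕ} (hlam : 0 < lam)
    (ha : lam ≤ a) (hμ₀ : lam ≤ μ₀ + 1)
    (hf : ∀ μ : ℕ, f (μ + 1) = f μ * ((1 - lam / (μ + 1)) * (1 - lam / (μ + a))))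
    (hμ : μ₀ ≤ μ) :
    |f μ| * ((μ + 1) ^ lam * (μ + a) ^ lam) ≤ |f μ₀| * ((μ₀ + 1) ^ lam * (μ₀ + a) ^ lam) := by
  induction μ, hμ using Nat.le_induction with
  | base => exact le_rfl
  | succ μ hμ ih =>
    refine le_trans ?_ ih
    have hμ' : (μ₀ : ℝ) ≤ μ := by exact_mod_cast hμ
    have h₁ : 0 ≤ 1 - lam / (μ + 1) := by
      rw [sub_nonneg, div_le_one (by positivity)]; linarith
    have hμa : lam ≤ μ + a := by linarith [(Nat.cast_nonneg μ : (0 : ℝ) ≤ μ)]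
    have h₂ : 0 ≤ 1 - lam / (μ + a) := by
      rw [sub_nonneg, div_le_one (by linarith)]; exact hμa
    rw [hf, abs_mul, abs_mul, abs_of_nonneg h₁, abs_of_nonneg h₂, Nat.cast_succ,
      add_right_comm (μ : ℝ) 1 a]
    calc |f μ| * ((1 - lam / (μ + 1)) * (1 - lam / (μ + a))) *
          ((μ + 1 + 1) ^ lam * (μ + a + 1) ^ lam)
        = |f μ| * (((1 - lam / (μ + 1)) * (μ + 1 + 1) ^ lam) *
            ((1 - lam / (μ + a)) * (μ + a + 1) ^ lam)) := by ring
      _ ≤ |f μ| * ((μ + 1) ^ lam * (μ + a) ^ lam) := by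
        gcongr
        · exact mul_nonneg h₂ (rpow_nonneg (by linarith) _)
        · exact one_sub_div_mul_add_one_rpow_le hlam.le (by positivity)
        · exact one_sub_div_mul_add_one_rpow_le hlam.le (by linarith)

theorem risingFactorial_succ (x : ℝ) (m : ℕ) :
    risingFactorial x (m + 1) = risingFactorial x m * (x + m) :=
  Finset.prod_range_succ _ _

theorem betaCoef_succ {lam : ℝ} (hlam : 0 ≤ lam) (n μ : ℕ) :
    betaCoef lam n (μ + 1) =
      betaCoef lam n μ * ((1 - lam / (μ + 1)) * (1 - lam / (μ + (n + 1 + lam)))) := by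
  have h₁ : (μ : ℝ) + 1 ≠ 0 := by positivity
  have h₂ : (μ : ℝ) + (n + 1 + lam) ≠ 0 := by positivity
  have hratio : (1 - lam / (μ + 1)) * (1 - lam / (μ + (n + 1 + lam))) =
      (1 - lam + μ) * (n + 1 + μ) / ((μ + 1) * (n + lam + 1 + μ)) := by
    field_simp; ring
  rw [hratio, betaCoef, betaCoef, risingFactorial_succ, risingFactorial_succ,
    risingFactorial_succ, Nat.factorial_succ, div_mul_div_comm]
  push_cast
  congr 1 <;> ring

theorem betaCoef_decay_general (lam : ℝ) (hlam : 0 < lam) (n : ℕ) :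
    ∃ c : ℝ, 0 < c ∧ ∀ μ : ℕ, 1 ≤ μ →
      |betaCoef lam n μ| ≤ c * (μ : ℝ) ^ (-(2 * lam)) := by
  set a : ℝ := n + 1 + lam
  have ha : lam ≤ a := by simp only [a]; linarith [(Nat.cast_nonneg n : (0 : ℝ) ≤ n)]
  have hweight (μ : ℕ) : (μ : ℝ) ^ (2 * lam) ≤ (μ + 1) ^ lam * (μ + a) ^ lam := by
    rw [two_mul, rpow_add' (Nat.cast_nonneg μ) (by positivity)]
    gcongr <;> linarith
  have hbdd : BddAbove (Set.range fun μ : ℕ => |betaCoef lam n μ| * (μ : ℝ) ^ (2 * lam)) := by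
    set μ₀ := ⌈lam⌉₊
    refine Filter.IsBoundedUnder.bddAbove_range <| Filter.isBoundedUnder_of_eventually_le
      (a := |betaCoef lam n μ₀| * ((μ₀ + 1) ^ lam * (μ₀ + a) ^ lam)) <|
      Filter.eventually_atTop.2 ⟨μ₀, fun μ hμ => ?_⟩
    calc |betaCoef lam n μ| * (μ : ℝ) ^ (2 * lam)
        ≤ |betaCoef lam n μ| * ((μ + 1) ^ lam * (μ + a) ^ lam) := by gcongr; exact hweight μ
      _ ≤ _ := abs_mul_rpow_le_of_succ_eq hlam ha (by linarith [Nat.le_ceil lam])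
          (betaCoef_succ hlam.le n) hμ
  obtain ⟨C, hC⟩ := hbdd
  refine ⟨max C 1, by positivity, fun μ hμ => ?_⟩
  have hμpos : (0 : ℝ) < μ := by exact_mod_cast hμ
  calc |betaCoef lam n μ|
      = |betaCoef lam n μ| * (μ : ℝ) ^ (2 * lam) * (μ : ℝ) ^ (-(2 * lam)) := by
        rw [mul_assoc, ← rpow_add hμpos, add_neg_cancel, rpow_zero, mul_one]
    _ ≤ max C 1 * (μ : ℝ) ^ (-(2 * lam)) := by
        gcongr
        exact (hC ⟨μ, rfl⟩).trans (le_max_left _ _)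

/-- for non-integer `λ > 0` and `n ≥ 0`, there is a constant
`C > 0` (depending on `λ` and `n`) with `|β_{λ,n,μ}| ≤ C μ^(-2λ)` for all
`μ ≥ 1`. -/
theorem betaCoef_decay (lam : ℝ) (hlam : 0 < lam) (hnotint : ∀ m : ℕ, lam ≠ (m : ℝ))
    (n : ℕ) :
    ∃ c : ℝ, 0 < c ∧ ∀ μ : ℕ, 1 ≤ μ →
      |betaCoef lam n μ| ≤ c * (μ : ℝ) ^ (-(2 * lam)) :=
  betaCoef_decay_general lam hlam n
end

section
/- Let α > 0 and ψ_α(θ) := exp(−θ/α) for θ ∈ [0,π]. Then the 2-Schoenberg coefficients b_{n,2}(α) := (n+1/2)∫₀^π P_n(cos θ) ψ_α(θ) sin θ dθ are given, for every n ≥ 0, by b_{n,2}(α) = (2n+1) 2^{n−1} { Σ_{m even, 0≤m≤n} binom(n,m) binom((n+m−1)/2, n) ((1+e^{−π/α})/((m+1)2^m)) [ 2^m − Σ_{k=0}^{m/2} binom(m+1,(m−2k)/2)/((2k+1)²α²+1) ] + Σ_{m odd, 0≤m≤n} binom(n,m) binom((n+m−1)/2, n) ((1−e^{−π/α})/((m+1)2^m))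 [ 2^m − (1/2)binom(m+1,(m+1)/2) − Σ_{k=1}^{(m+1)/2} binom(m+1,(m−2k+1)/2)/(4k²α²+1) ] }. -/
open Real

/-- The Legendre polynomials, via the standard three-term recurrence
`(n+2) P_{n+2}(x) = (2n+3) x P_{n+1}(x) - (n+1) P_n(x)`, `P_0 = 1`, `P_1 = x`. -/
noncomputable def legendreP : ℕ → ℝ → ℝ
  | 0, _ => 1
  | 1, x => x
  | n + 2, x =>
      ((2 * (n : ℝ) + 3) * x * legendreP (n + 1) x - ((n : ℝ) + 1) * legendreP n x)
        / ((n : ℝ) + 2)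

/-- Generalized binomial coefficient `binom(a, n) = a(a-1)⋯(a-n+1)/n!` for real `a`. -/
noncomputable def genBinom (a : ℝ) (n : ℕ) : ℝ :=
  (∏ i ∈ Finset.range n, (a - i)) / (n.factorial : ℝ)

/-!
Expanding `P_n` in monomials reduces `b_{n,2}` to the moments
`∫₀^π cos^m θ e^{-θ/α} sin θ dθ`. Integration by parts turns such a moment into a boundary
term and `∫₀^π cos^{m+1} θ e^{-θ/α} dθ`; the power-reduction formula
`(2 cos θ)^p = ∑ⱼ binom(p,j) cos((2j-p)θ)` splits the latter into the elementary integrals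
`∫₀^π cos(kθ) e^{-θ/α} dθ = α(1 - (-1)^k e^{-π/α})/(1 + α²k²)`, and pairing the equal
terms `j` and `p - j` gives the half-range sums of the closed form.
-/

open Finset

lemma genBinom_succ (y : ℝ) (n : ℕ) :
    genBinom y (n + 1) = genBinom y n * (y - n) / (n + 1) := by
  simp only [genBinom, prod_range_succ, Nat.factorial_succ, Nat.cast_mul, Nat.cast_succ]
  field_simp

lemma genBinom_add_one_succ (y : ℝ) (n : ℕ) :
    genBinom (y + 1) (n + 1) = (y + 1) * genBinom y n / (n + 1) := by
  simp only [genBinom, prod_range_succ', Nat.factorial_succ, Nat.cast_mul, Nat.cast_succ,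
    Nat.cast_zero, sub_zero, add_sub_add_right_eq_sub]
  field_simp

lemma Nat.cast_choose_succ_mul_sub_mul_sub (n m : ℕ) :
    ((n + 1).choose m : ℝ) * ((n : ℝ) + 1 - m) * ((n : ℝ) - m)
      = (n + 1) * (m + 1) * n.choose (m + 1) := by
  rcases le_or_gt m n with hmn | hnm
  · obtain ⟨d, rfl⟩ := Nat.exists_eq_add_of_le hmn
    have h1 := Nat.choose_succ_right_eq (m + d + 1) m
    have h2 := Nat.choose_succ_right_eq (m + d + 1) (m + 1)
    have h3 := Nat.add_one_mul_choose_eq (m + d) (m + 1)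
    rw [show m + d + 1 - m = d + 1 by omega] at h1
    rw [show m + d + 1 - (m + 1) = d by omega] at h2
    have e1 := congrArg (Nat.cast : ℕ → ℝ) h1
    have e2 := congrArg (Nat.cast : ℕ → ℝ) h2
    have e3 := congrArg (Nat.cast : ℕ → ℝ) h3
    push_cast at e1 e2 e3 ⊢
    linear_combination (-(d : ℝ)) * e1 - ((m : ℝ) + 1) * e2 - ((m : ℝ) + 1) * e3
  · rw [Nat.choose_eq_zero_of_lt (by omega : n < m + 1)]
    rcases Nat.lt_or_ge (n + 1) m with h | h
    · simp [Nat.choose_eq_zero_of_lt h]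
    · simp [show (m : ℝ) = n + 1 by exact_mod_cast (by omega : m = n + 1)]

noncomputable def legendreCoeff (n m : ℕ) : ℝ :=
  2 ^ n * n.choose m * genBinom (((n : ℝ) + m - 1) / 2) n

lemma legendreCoeff_eq_zero_of_lt {n m : ℕ} (h : n < m) : legendreCoeff n m = 0 := by
  simp [legendreCoeff, Nat.choose_eq_zero_of_lt h]

lemma legendreCoeff_add_two_zero (n : ℕ) :
    (n + 2 : ℝ) * legendreCoeff (n + 2) 0 = -(n + 1) * legendreCoeff n 0 := by
  have hy : (((n + 2 : ℕ) : ℝ) + ((0 : ℕ) : ℝ) - 1) / 2 = ((n : ℝ) + (0 : ℕ) - 1) / 2 + 1 := by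
    push_cast
    ring
  simp only [legendreCoeff, Nat.choose_zero_right, Nat.cast_one, mul_one]
  rw [hy, genBinom_add_one_succ, genBinom_succ]
  push_cast
  field_simp
  ring

lemma legendreCoeff_add_two_succ (n m : ℕ) :
    (n + 2 : ℝ) * legendreCoeff (n + 2) (m + 1)
      = (2 * n + 3) * legendreCoeff (n + 1) m - (n + 1) * legendreCoeff n (m + 1) := by
  set y : ℝ := ((n : ℝ) + m) / 2
  have hy2 : (((n + 2 : ℕ) : ℝ) + ((m + 1 : ℕ) : ℝ) - 1) / 2 = y + 1 := by push_cast; ring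
  have hy1 : (((n + 1 : ℕ) : ℝ) + (m : ℝ) - 1) / 2 = y := by push_cast; ring
  have hy0 : ((n : ℝ) + ((m + 1 : ℕ) : ℝ) - 1) / 2 = y := by push_cast; ring
  have hA : ((n + 2).choose (m + 1) : ℝ) = (n + 2) * (n + 1).choose m / (m + 1) := by
    rw [eq_div_iff (by positivity)]
    exact_mod_cast (Nat.add_one_mul_choose_eq (n + 1) m).symm
  have hD : (n.choose (m + 1) : ℝ)
      = (n + 1).choose m * (n + 1 - m) * (n - m) / ((n + 1) * (m + 1)) := by
    rw [eq_div_iff (by positivity), Nat.cast_choose_succ_mul_sub_mul_sub]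
    ring
  simp only [legendreCoeff]
  rw [hy2, hy1, hy0, genBinom_add_one_succ, genBinom_succ, hA, hD]
  simp only [y]
  push_cast
  field_simp
  ring

lemma sum_legendreCoeff_mul_pow_eq_of_le {k N : ℕ} (h : k ≤ N) (x : ℝ) :
    ∑ m ∈ range (k + 1), legendreCoeff k m * x ^ m
      = ∑ m ∈ range (N + 1), legendreCoeff k m * x ^ m := by
  refine sum_subset (range_subset_range.mpr (by omega)) fun m _ hm => ?_
  rw [legendreCoeff_eq_zero_of_lt (by simpa using hm), zero_mul]

theorem legendreP_eq_sum (n : ℕ) (x : ℝ) :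
    legendreP n x = ∑ m ∈ range (n + 1), legendreCoeff n m * x ^ m := by
  induction n using Nat.twoStepInduction with
  | zero => simp [legendreP, legendreCoeff, genBinom]
  | one => simp [legendreP, legendreCoeff, genBinom, sum_range_succ]
  | more n ih₀ ih₁ =>
    have hsplit : ∀ k, ∑ m ∈ range (n + 3), legendreCoeff k m * x ^ m
        = legendreCoeff k 0 + ∑ m ∈ range (n + 2), legendreCoeff k (m + 1) * x ^ (m + 1) := by
      intro k
      rw [sum_range_succ', add_comm, pow_zero, mul_one]
    have hx : x * ∑ m ∈ range (n + 2), legendreCoeff (n + 1) m * x ^ m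
        = ∑ m ∈ range (n + 2), legendreCoeff (n + 1) m * x ^ (m + 1) := by
      rw [mul_sum]
      exact sum_congr rfl fun m _ => by ring
    rw [legendreP, ih₀, ih₁, sum_legendreCoeff_mul_pow_eq_of_le (by omega : n ≤ n + 2),
      hsplit, hsplit, div_eq_iff (by positivity), mul_assoc, hx]
    have hcoeff : ∀ m ∈ range (n + 2), legendreCoeff (n + 2) (m + 1) * x ^ (m + 1) * (n + 2)
        = (2 * n + 3) * (legendreCoeff (n + 1) m * x ^ (m + 1))
          - (n + 1) * (legendreCoeff n (m + 1) * x ^ (m + 1)) := fun m _ => by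
      linear_combination x ^ (m + 1) * legendreCoeff_add_two_succ n m
    have hsum := sum_congr rfl hcoeff
    rw [← sum_mul, sum_sub_distrib, ← mul_sum, ← mul_sum] at hsum
    linear_combination -hsum - legendreCoeff_add_two_zero n

lemma integral_legendreP_cos_mul (n : ℕ) {g : ℝ → ℝ} (hg : Continuous g) (a b : ℝ) :
    ∫ θ in a..b, legendreP n (cos θ) * g θ
      = ∑ m ∈ range (n + 1), legendreCoeff n m * ∫ θ in a..b, cos θ ^ m * g θ := by
  simp_rw [legendreP_eq_sum, sum_mul, mul_assoc]
  rw [intervalIntegral.integral_finsetSum fun m _ =>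
    (by fun_prop : Continuous _).intervalIntegrable _ _]
  simp_rw [intervalIntegral.integral_const_mul]

lemma hasDerivAt_exp_mul_mul_cos_add_sin (b k θ : ℝ) :
    HasDerivAt (fun θ => exp (b * θ) * (b * cos (k * θ) + k * sin (k * θ)))
      ((b ^ 2 + k ^ 2) * (cos (k * θ) * exp (b * θ))) θ := by
  have he := ((hasDerivAt_id θ).const_mul b).exp
  have hc := ((hasDerivAt_id θ).const_mul k).cos
  have hs := ((hasDerivAt_id θ).const_mul k).sin
  simp only [id, mul_one] at he hc hs
  refine (he.mul ((hc.const_mul b).add (hs.const_mul k))).congr_deriv ?_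
  simp only [Pi.add_apply]
  ring

lemma integral_cos_int_mul_mul_exp {α : ℝ} (hα : α ≠ 0) (k : ℤ) :
    ∫ θ in (0 : ℝ)..π, cos (k * θ) * exp (-θ / α)
      = α * (1 - (-1) ^ k * exp (-π / α)) / (1 + α ^ 2 * k ^ 2) := by
  have hexp : ∀ θ : ℝ, -θ / α = -α⁻¹ * θ := fun θ => by ring
  have hD : (-α⁻¹) ^ 2 + (k : ℝ) ^ 2 ≠ 0 :=
    (add_pos_of_pos_of_nonneg (pow_two_pos_of_ne_zero (by simpa using hα)) (sq_nonneg _)).ne'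
  simp_rw [hexp]
  rw [intervalIntegral.integral_eq_sub_of_hasDerivAt
    (f := fun θ => ((-α⁻¹) ^ 2 + (k : ℝ) ^ 2)⁻¹ *
      (exp (-α⁻¹ * θ) * (-α⁻¹ * cos (k * θ) + k * sin (k * θ))))
    (fun θ _ => ((hasDerivAt_exp_mul_mul_cos_add_sin (-α⁻¹) k θ).const_mul _).congr_deriv
      (inv_mul_cancel_left₀ hD _))
    (by apply Continuous.intervalIntegrable; fun_prop)]
  simp only [cos_int_mul_pi, sin_int_mul_pi, mul_zero, cos_zero, sin_zero, exp_zero]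
  field_simp
  ring

lemma two_mul_cos_pow (p : ℕ) (θ : ℝ) :
    (2 * cos θ) ^ p = ∑ j ∈ range (p + 1), (p.choose j : ℝ) * cos ((2 * j - p : ℤ) * θ) := by
  have hexp : (((2 * cos θ) ^ p : ℝ) : ℂ)
      = ∑ j ∈ range (p + 1),
          (p.choose j : ℂ) * Complex.exp (((2 * j - p : ℤ) * θ : ℝ) * Complex.I) := by
    push_cast
    rw [Complex.two_cos, add_pow]
    refine sum_congr rfl fun j hj => ?_
    rw [← Complex.exp_nat_mul, ← Complex.exp_nat_mul, ← Complex.exp_add, mul_comm]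
    congr 2
    rw [Nat.cast_sub (mem_range_succ_iff.mp hj)]
    ring
  simpa only [Complex.ofReal_re, Complex.re_sum, Complex.mul_re, Complex.natCast_re,
    Complex.natCast_im, Complex.exp_ofReal_mul_I_re, zero_mul, sub_zero]
    using congrArg Complex.re hexp

lemma integral_cos_pow_mul_exp {α : ℝ} (hα : α ≠ 0) (p : ℕ) :
    ∫ θ in (0 : ℝ)..π, cos θ ^ p * exp (-θ / α)
      = α * (1 - (-1) ^ p * exp (-π / α)) / 2 ^ p *
          ∑ j ∈ range (p + 1), (p.choose j : ℝ) / (1 + α ^ 2 * ((p : ℝ) - 2 * j) ^ 2) := by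
  have hpow : ∀ θ, cos θ ^ p * exp (-θ / α) = ∑ j ∈ range (p + 1),
      (p.choose j : ℝ) / 2 ^ p * (cos ((2 * j - p : ℤ) * θ) * exp (-θ / α)) := fun θ => by
    calc cos θ ^ p * exp (-θ / α) = (2 * cos θ) ^ p / 2 ^ p * exp (-θ / α) := by
          rw [mul_pow]; field_simp
      _ = _ := by
          rw [two_mul_cos_pow, sum_div, sum_mul]
          exact sum_congr rfl fun j _ => by ring
  have hsign : ∀ j : ℕ, (-1 : ℝ) ^ (2 * j - p : ℤ) = (-1) ^ p := fun j => by
    rw [zpow_sub₀ (by norm_num), zpow_mul]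
    simp [← inv_pow]
  simp_rw [hpow]
  rw [intervalIntegral.integral_finsetSum fun j _ =>
    (by fun_prop : Continuous _).intervalIntegrable _ _, mul_sum]
  refine sum_congr rfl fun j _ => ?_
  rw [intervalIntegral.integral_const_mul, integral_cos_int_mul_mul_exp hα, hsign]
  push_cast
  ring

lemma integral_cos_pow_mul_exp_mul_sin_eq_sub_integral (α : ℝ) (m : ℕ) :
    ∫ θ in (0 : ℝ)..π, cos θ ^ m * exp (-θ / α) * sin θ
      = (1 + (-1) ^ m * exp (-π / α)) / (m + 1)
        - (∫ θ in (0 : ℝ)..π, cos θ ^ (m + 1) * exp (-θ / α)) / ((m + 1) * α) := by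
  have hu : ∀ θ : ℝ, HasDerivAt (fun θ => exp (-θ / α)) (-(exp (-θ / α) / α)) θ :=
    fun θ => by simpa [neg_div, div_eq_mul_inv] using ((hasDerivAt_neg θ).div_const α).exp
  have hv : ∀ θ : ℝ,
      HasDerivAt (fun θ => -(cos θ ^ (m + 1) / (m + 1))) (cos θ ^ m * sin θ) θ :=
    fun θ => by
      refine (((hasDerivAt_cos θ).pow (m + 1)).div_const _).neg.congr_deriv ?_
      push_cast
      field_simp
  have hparts := intervalIntegral.integral_mul_deriv_eq_deriv_mul (a := 0) (b := π)
    (fun θ _ => hu θ) (fun θ _ => hv θ) (by apply Continuous.intervalIntegrable; fun_prop)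
    (by apply Continuous.intervalIntegrable; fun_prop)
  simp only [cos_pi, cos_zero, neg_zero, zero_div, exp_zero] at hparts
  have hlhs : ∫ θ in (0 : ℝ)..π, cos θ ^ m * exp (-θ / α) * sin θ
      = ∫ θ in (0 : ℝ)..π, exp (-θ / α) * (cos θ ^ m * sin θ) :=
    intervalIntegral.integral_congr fun θ _ => by ring
  have hrem : ∫ θ in (0 : ℝ)..π, -(exp (-θ / α) / α) * -(cos θ ^ (m + 1) / (m + 1))
      = ∫ θ in (0 : ℝ)..π, cos θ ^ (m + 1) * exp (-θ / α) / ((m + 1) * α) :=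
    intervalIntegral.integral_congr fun θ _ => by simp only [div_eq_mul_inv, mul_inv]; ring
  rw [← intervalIntegral.integral_div, hlhs, hparts, hrem]
  ring

lemma integral_cos_pow_mul_exp_mul_sin {α : ℝ} (hα : α ≠ 0) (m : ℕ) :
    ∫ θ in (0 : ℝ)..π, cos θ ^ m * exp (-θ / α) * sin θ
      = (1 + (-1) ^ m * exp (-π / α)) / ((m + 1) * 2 ^ (m + 1)) *
          (2 ^ (m + 1) - ∑ j ∈ range (m + 2),
            ((m + 1).choose j : ℝ) / (1 + α ^ 2 * ((m : ℝ) + 1 - 2 * j) ^ 2)) := by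
  rw [integral_cos_pow_mul_exp_mul_sin_eq_sub_integral, integral_cos_pow_mul_exp hα]
  push_cast
  field_simp
  ring

namespace Finset

variable {M : Type*} [AddCommMonoid M] (f : ℕ → M)

lemma sum_range_add_eq_sum_range_of_symm (s t : ℕ)
    (hf : ∀ j ≤ t, f (s + t - j) = f j) :
    ∑ i ∈ range (t + 1), f (s + i) = ∑ j ∈ range (t + 1), f j := by
  rw [← sum_range_reflect f (t + 1)]
  refine sum_congr rfl fun i hi => ?_
  have hi := mem_range_succ_iff.mp hi
  rw [show t + 1 - 1 - i = t - i by omega, ← hf (t - i) (by omega)]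
  congr 1
  omega

lemma sum_range_two_mul_add_two_of_symm (t : ℕ)
    (hf : ∀ j ≤ t, f (2 * t + 1 - j) = f j) :
    ∑ j ∈ range (2 * t + 2), f j = 2 • ∑ j ∈ range (t + 1), f j := by
  rw [show 2 * t + 2 = (t + 1) + (t + 1) by ring, sum_range_add, two_nsmul,
    sum_range_add_eq_sum_range_of_symm f (t + 1) t fun j hj => by
      rw [← hf j hj]; congr 1; omega]

lemma sum_range_two_mul_add_three_of_symm (t : ℕ)
    (hf : ∀ j ≤ t, f (2 * t + 2 - j) = f j) :
    ∑ j ∈ range (2 * t + 3), f j = f (t + 1) + 2 • ∑ j ∈ range (t + 1), f j := by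
  rw [show 2 * t + 3 = (t + 2) + (t + 1) by ring, sum_range_add, sum_range_succ,
    sum_range_add_eq_sum_range_of_symm f (t + 2) t fun j hj => by
      rw [← hf j hj]; congr 1; omega, two_nsmul]
  abel

end Finset

lemma integral_cos_pow_mul_exp_mul_sin_of_even {α : ℝ} (hα : α ≠ 0) {m : ℕ} (hm : Even m) :
    ∫ θ in (0 : ℝ)..π, cos θ ^ m * exp (-θ / α) * sin θ
      = (1 + exp (-π / α)) / ((m + 1) * 2 ^ m) *
          (2 ^ m - ∑ k ∈ range (m / 2 + 1),
            ((m + 1).choose ((m - 2 * k) / 2) : ℝ) / ((2 * (k : ℝ) + 1) ^ 2 * α ^ 2 + 1)) := by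
  obtain ⟨t, rfl⟩ := hm.two_dvd
  set f : ℕ → ℝ := fun j =>
    ((2 * t + 1).choose j : ℝ) / (1 + α ^ 2 * (((2 * t : ℕ) : ℝ) + 1 - 2 * j) ^ 2)
  have hsymm : ∀ j ≤ t, f (2 * t + 1 - j) = f j := fun j hj => by
    simp only [f]
    rw [Nat.choose_symm (by omega), Nat.cast_sub (by omega)]
    push_cast
    ring
  have hhalf : ∑ k ∈ range (2 * t / 2 + 1),
      ((2 * t + 1).choose ((2 * t - 2 * k) / 2) : ℝ) / ((2 * (k : ℝ) + 1) ^ 2 * α ^ 2 + 1)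
        = ∑ j ∈ range (t + 1), f j := by
    rw [Nat.mul_div_cancel_left t two_pos, ← sum_range_reflect f]
    refine sum_congr rfl fun k hk => ?_
    have hk := mem_range_succ_iff.mp hk
    simp only [f]
    rw [show (2 * t - 2 * k) / 2 = t + 1 - 1 - k by omega, Nat.cast_sub (by omega)]
    push_cast
    ring
  rw [integral_cos_pow_mul_exp_mul_sin hα, sum_range_two_mul_add_two_of_symm f t hsymm, hhalf,
    Even.neg_one_pow ⟨t, by ring⟩, pow_succ]
  field_simp
  ring

lemma integral_cos_pow_mul_exp_mul_sin_of_odd {α : ℝ} (hα : α ≠ 0) {m : ℕ} (hm : Odd m) :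
    ∫ θ in (0 : ℝ)..π, cos θ ^ m * exp (-θ / α) * sin θ
      = (1 - exp (-π / α)) / ((m + 1) * 2 ^ m) *
          (2 ^ m - 1 / 2 * ((m + 1).choose ((m + 1) / 2) : ℝ) - ∑ k ∈ Icc 1 ((m + 1) / 2),
            ((m + 1).choose ((m + 1 - 2 * k) / 2) : ℝ) / (4 * (k : ℝ) ^ 2 * α ^ 2 + 1)) := by
  obtain ⟨t, rfl⟩ := hm
  set f : ℕ → ℝ := fun j =>
    ((2 * t + 1 + 1).choose j : ℝ) / (1 + α ^ 2 * (((2 * t + 1 : ℕ) : ℝ) + 1 - 2 * j) ^ 2)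
  have hsymm : ∀ j ≤ t, f (2 * t + 2 - j) = f j := fun j hj => by
    simp only [f]
    rw [Nat.choose_symm (by omega), Nat.cast_sub (by omega)]
    push_cast
    ring
  have hmid : f (t + 1) = ((2 * t + 2).choose (t + 1) : ℝ) := by
    simp only [f]
    push_cast
    ring_nf
  have hhalf : ∑ k ∈ Icc 1 ((2 * t + 1 + 1) / 2),
      ((2 * t + 1 + 1).choose ((2 * t + 1 + 1 - 2 * k) / 2) : ℝ)
          / (4 * (k : ℝ) ^ 2 * α ^ 2 + 1) = ∑ j ∈ range (t + 1), f j := by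
    rw [show (2 * t + 1 + 1) / 2 = t + 1 by omega, ← Ico_add_one_right_eq_Icc,
      sum_Ico_eq_sum_range, Nat.add_sub_cancel, ← sum_range_reflect f]
    refine sum_congr rfl fun k hk => ?_
    have hk := mem_range_succ_iff.mp hk
    simp only [f]
    rw [show (2 * t + 1 + 1 - 2 * (1 + k)) / 2 = t + 1 - 1 - k by omega, Nat.cast_sub (by omega)]
    push_cast
    ring
  rw [integral_cos_pow_mul_exp_mul_sin hα, show 2 * t + 1 + 2 = 2 * t + 3 by ring,
    sum_range_two_mul_add_three_of_symm f t hsymm, hmid, hhalf,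
    Odd.neg_one_pow ⟨t, rfl⟩, show (2 * t + 1 + 1) / 2 = t + 1 by omega, pow_succ]
  push_cast
  field_simp
  ring

/-- closed form for the 2-Schoenberg coefficients
`b_{n,2}(α) = (n + 1/2) ∫₀^π P_n(cos θ) e^(-θ/α) sin θ dθ` of the exponential
family `ψ_α(θ) = exp(-θ/α)`. -/
theorem exponential_schoenberg_coefficients
    (α : ℝ) (hα : 0 < α) (n : ℕ) :
    ((n : ℝ) + 1 / 2) *
        ∫ θ in (0 : ℝ)..π, legendreP n (Real.cos θ) * Real.exp (-θ / α) * Real.sin θ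
      = (2 * (n : ℝ) + 1) * (2 : ℝ) ^ ((n : ℤ) - 1) *
        ((∑ m ∈ (Finset.range (n + 1)).filter (fun m => Even m),
            (n.choose m : ℝ) * genBinom (((n : ℝ) + (m : ℝ) - 1) / 2) n *
              ((1 + Real.exp (-π / α)) / (((m : ℝ) + 1) * 2 ^ m)) *
              ((2 : ℝ) ^ m -
                ∑ k ∈ Finset.range (m / 2 + 1),
                  ((m + 1).choose ((m - 2 * k) / 2) : ℝ) /
                    ((2 * (k : ℝ) + 1) ^ 2 * α ^ 2 + 1)))
        + ∑ m ∈ (Finset.range (n + 1)).filter (fun m => Odd m),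
            (n.choose m : ℝ) * genBinom (((n : ℝ) + (m : ℝ) - 1) / 2) n *
              ((1 - Real.exp (-π / α)) / (((m : ℝ) + 1) * 2 ^ m)) *
              ((2 : ℝ) ^ m - (1 / 2) * ((m + 1).choose ((m + 1) / 2) : ℝ) -
                ∑ k ∈ Finset.Icc 1 ((m + 1) / 2),
                  ((m + 1).choose ((m + 1 - 2 * k) / 2) : ℝ) /
                    (4 * (k : ℝ) ^ 2 * α ^ 2 + 1))) := by
  have hexpand : ∫ θ in (0 : ℝ)..π, legendreP n (cos θ) * exp (-θ / α) * sin θ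
      = ∑ m ∈ range (n + 1), legendreCoeff n m *
          ∫ θ in (0 : ℝ)..π, cos θ ^ m * exp (-θ / α) * sin θ := by
    simpa only [mul_assoc] using
      integral_legendreP_cos_mul n (g := fun θ => exp (-θ / α) * sin θ) (by fun_prop) 0 π
  rw [hexpand, sum_filter, sum_filter, ← sum_add_distrib, mul_sum,
    mul_sum, zpow_sub_one₀ two_ne_zero, zpow_natCast]
  refine sum_congr rfl fun m _ => ?_
  rcases Nat.even_or_odd m with hm | hm
  · rw [integral_cos_pow_mul_exp_mul_sin_of_even hα.ne' hm, if_pos hm,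
      if_neg (Nat.not_odd_iff_even.mpr hm), legendreCoeff]
    ring
  · rw [integral_cos_pow_mul_exp_mul_sin_of_odd hα.ne' hm, if_neg (Nat.not_even_iff_odd.mpr hm),
      if_pos hm, legendreCoeff]
    ring
end
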